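/- arXiv:1604.05757 — 2 statements merged into one kernel-verified Lean document; each statement's English description precedes it below -/
import Mathlib

section
/- Let Q̄ be an r-prover question set, let 𝒬 be a probability distribution with support Q̄, let ε := min_{q̄ ∈ Q̄} 𝒬(q̄) and α := ε·|Q̄|. Suppose f : ℕ_{>0} → [0,1] is non-increasing and satisfies val(H^m) ≤ f(m) for every m ≥ 1 and every non-trivial game H with question set Q̄ (uniform question distribution). Then for every game G with question set Q̄ whose questions are sampled according to 𝒬 and which is non-trivial, and every n ≥ 1, val(G^n) ≤ exp(−α²n/2) + f(⌈αn/2⌉). -/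
/-!
Write `Qd = ε + g` with `g ≥ 0` on `Qbar` and `∑ g = 1 - α`. Expanding
`∏ᵢ Qd (qᵢ) = ∑_T ε^|T| ∏_{i ∉ T} g (qᵢ)` exhibits `Gⁿ` as a mixture, over a random set `T`
of coordinates containing each coordinate independently with probability `α`, of games whose
questions on `T` are uniform on `Qbar`. Once the questions outside `T` are fixed, the provers
play `H^|T|`, where `H` is the uniform game with question set `Qbar` and predicate `V`, so they
win with probability at most `val (H^|T|)`. By Hoeffding's inequality `|T| < αn/2` has
probability at most `exp (-α²n/2)`, and otherwise `val (H^|T|) ≤ f |T| ≤ f ⌈αn/2⌉`. `H` is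
non-trivial because `G` is and both have full support `Qbar`.
-/

/-- The value of an `r`-prover game: the question set is `Qbar`, a finite set of
question tuples; `V` is the verification predicate; the value is the maximum over
strategies (one function `Q j → A j` per prover) of the probability, over a uniformly
random question tuple from `Qbar`, that the verifier accepts. -/
noncomputable def gameValue {r : ℕ} {Q A : Fin r → Type}
    (Qbar : Finset (∀ j, Q j)) (V : (∀ j, Q j) → (∀ j, A j) → Bool) : ℝ :=
  sSup { x : ℝ | ∃ S : ∀ j, Q j → A j,
    x = ((Qbar.filter fun q => V q (fun j => S j (q j)) = true).card : ℝ) / (Qbar.card : ℝ) }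

/-- The value of the `n`-fold parallel repetition of a game: questions are `n`-tuples
of question tuples sampled independently and uniformly from `Qbar`, each prover `j`
sees only its own vector of questions, and the verifier accepts iff `V` accepts in
every coordinate. -/
noncomputable def repValue {r : ℕ} {Q A : Fin r → Type} [∀ j, DecidableEq (Q j)]
    (n : ℕ) (Qbar : Finset (∀ j, Q j)) (V : (∀ j, Q j) → (∀ j, A j) → Bool) : ℝ :=
  sSup { x : ℝ | ∃ S : ∀ j, (Fin n → Q j) → (Fin n → A j),
    x = (((Fintype.piFinset fun _ : Fin n => Qbar).filter fun q =>
          ∀ i, V (q i) (fun j => S j (fun i' => q i' j) i) = true).card : ℝ) /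
        ((Fintype.piFinset fun _ : Fin n => Qbar).card : ℝ) }

/-- The value of a game whose question tuple is sampled according to the
distribution `Qd` (supported on `Qbar`): maximum over strategies of the total
probability mass of accepted question tuples. -/
noncomputable def distValue {r : ℕ} {Q A : Fin r → Type}
    (Qbar : Finset (∀ j, Q j)) (Qd : (∀ j, Q j) → ℝ)
    (V : (∀ j, Q j) → (∀ j, A j) → Bool) : ℝ :=
  sSup { x : ℝ | ∃ S : ∀ j, Q j → A j,
    x = ∑ q ∈ Qbar.filter (fun q => V q (fun j => S j (q j)) = true), Qd q }

/-- The value of the `n`-fold parallel repetition of a game whose `n` question tuples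
are sampled i.i.d. according to the distribution `Qd`. -/
noncomputable def distRepValue {r : ℕ} {Q A : Fin r → Type} [∀ j, DecidableEq (Q j)]
    (n : ℕ) (Qbar : Finset (∀ j, Q j)) (Qd : (∀ j, Q j) → ℝ)
    (V : (∀ j, Q j) → (∀ j, A j) → Bool) : ℝ :=
  sSup { x : ℝ | ∃ S : ∀ j, (Fin n → Q j) → (Fin n → A j),
    x = ∑ q ∈ (Fintype.piFinset fun _ : Fin n => Qbar).filter
          (fun q => ∀ i, V (q i) (fun j => S j (fun i' => q i' j) i) = true),
        ∏ i, Qd (q i) }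

open Finset Real

open MeasureTheory ProbabilityTheory in
-- Hoeffding's lemma for a Bernoulli variable of mean `α`, evaluated at `-s`.
lemma bernoulli_mgf_le {α : ℝ} (h0 : 0 ≤ α) (h1 : α ≤ 1) (s : ℝ) :
    α * exp (-s) + (1 - α) ≤ exp (-(α * s) + s ^ 2 / 8) := by
  let μ : Measure Bool :=
    ENNReal.ofReal α • Measure.dirac true + ENNReal.ofReal (1 - α) • Measure.dirac false
  have : IsProbabilityMeasure μ :=
    ⟨by simp [μ, ← ENNReal.ofReal_add h0 (by linarith : 0 ≤ 1 - α)]⟩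
  let X : Bool → ℝ := fun b => if b then 1 else 0
  have hX (f : ℝ → ℝ) : ∫ b, f (X b) ∂μ = α * f 1 + (1 - α) * f 0 := by
    rw [integral_fintype Integrable.of_finite]
    simp [μ, X, measureReal_def, h0, h1]
  have hmean : μ[X] = α := by simpa using hX id
  have hoeffding := (hasSubgaussianMGF_of_mem_Icc (μ := μ) (X := X) (a := 0) (b := 1)
    (by fun_prop) (ae_of_all _ fun b => by cases b <;> simp [X])).mgf_le (-s)
  rw [mgf, hmean, hX (fun x => exp (-s * (x - α)))] at hoeffding
  norm_num [show -(s * (1 - α)) = -s + α * s by ring, exp_add, mul_comm s α] at hoeffding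
  have hexp : exp (-(α * s)) * exp (α * s) = 1 := by rw [← exp_add]; simp
  calc α * exp (-s) + (1 - α)
      = exp (-(α * s)) * (α * (exp (-s) * exp (α * s)) + (1 - α) * exp (α * s)) := by
        linear_combination (-(α * exp (-s) + (1 - α))) * hexp
    _ ≤ exp (-(α * s)) * exp (1 / 4 * s ^ 2 / 2) := by gcongr
    _ = exp (-(α * s) + s ^ 2 / 8) := by rw [← exp_add]; ring_nf

lemma sum_pow_mul_pow_of_card_le_le_exp {ι : Type*} [Fintype ι] {α δ : ℝ}
    (h0 : 0 ≤ α) (h1 : α ≤ 1) (hδ : 0 ≤ δ) :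
    ∑ T : Finset ι with (#T : ℝ) ≤ (α - δ) * Fintype.card ι,
        α ^ #T * (1 - α) ^ (Fintype.card ι - #T)
      ≤ exp (-(2 * δ ^ 2 * Fintype.card ι)) := by
  set N := Fintype.card ι
  have hw (T : Finset ι) : 0 ≤ α ^ #T * (1 - α) ^ (N - #T) :=
    mul_nonneg (pow_nonneg h0 _) (pow_nonneg (sub_nonneg.mpr h1) _)
  -- Chernoff's bound `𝟙[k ≤ t] ≤ exp (s (t - k))` with `s = 4δ`, the minimiser of `-sδ + s²/8`
  calc ∑ T : Finset ι with (#T : ℝ) ≤ (α - δ) * N, α ^ #T * (1 - α) ^ (N - #T)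
      ≤ ∑ T : Finset ι, exp (4 * δ * ((α - δ) * N - #T)) * (α ^ #T * (1 - α) ^ (N - #T)) := by
        refine (sum_le_sum fun T hT => ?_).trans
          (sum_le_sum_of_subset_of_nonneg (filter_subset _ _) fun T _ _ => by positivity)
        refine le_mul_of_one_le_left (hw T) (one_le_exp ?_)
        have := (mem_filter.mp hT).2
        nlinarith
    _ = exp (4 * δ * (α - δ) * N) * (α * exp (-(4 * δ)) + (1 - α)) ^ N := by
        rw [← Fintype.sum_pow_mul_eq_add_pow, mul_sum]
        refine sum_congr rfl fun T _ => ?_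
        rw [mul_pow, ← exp_nat_mul,
          show 4 * δ * ((α - δ) * N - #T) = 4 * δ * (α - δ) * N + #T * -(4 * δ) by ring, exp_add]
        ring
    _ ≤ exp (4 * δ * (α - δ) * N) * exp (-(α * (4 * δ)) + (4 * δ) ^ 2 / 8) ^ N := by
        have : 0 ≤ α * exp (-(4 * δ)) + (1 - α) := by nlinarith [exp_pos (-(4 * δ))]
        gcongr
        exact bernoulli_mgf_le h0 h1 _
    _ = exp (-(2 * δ ^ 2 * N)) := by
        rw [← exp_nat_mul, ← exp_add]
        ring_nf

lemma sum_pow_mul_pow_of_card_lt_ceil_le_exp {ι : Type*} [Fintype ι] {α : ℝ}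
    (h0 : 0 ≤ α) (h1 : α ≤ 1) :
    ∑ T : Finset ι with #T < ⌈α * Fintype.card ι / 2⌉₊,
        α ^ #T * (1 - α) ^ (Fintype.card ι - #T)
      ≤ exp (-(α ^ 2 * Fintype.card ι) / 2) := by
  calc ∑ T : Finset ι with #T < ⌈α * Fintype.card ι / 2⌉₊,
        α ^ #T * (1 - α) ^ (Fintype.card ι - #T)
      ≤ ∑ T : Finset ι with (#T : ℝ) ≤ (α - α / 2) * Fintype.card ι,
          α ^ #T * (1 - α) ^ (Fintype.card ι - #T) := by
        refine sum_le_sum_of_subset_of_nonneg (monotone_filter_right _ fun T _ hT => ?_)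
          fun T _ _ => mul_nonneg (pow_nonneg h0 _) (pow_nonneg (sub_nonneg.mpr h1) _)
        linarith [Nat.lt_ceil.mp hT]
    _ ≤ exp (-(2 * (α / 2) ^ 2 * Fintype.card ι)) :=
        sum_pow_mul_pow_of_card_le_le_exp h0 h1 (by positivity)
    _ = exp (-(α ^ 2 * Fintype.card ι) / 2) := by ring_nf

lemma sum_pow_mul_pow_mul_le {ι : Type*} [Fintype ι] {α c : ℝ} {v : ℕ → ℝ} {m : ℕ}
    (h0 : 0 ≤ α) (h1 : α ≤ 1) (hc : 0 ≤ c) (hv : ∀ k, v k ≤ 1) (hvc : ∀ k, m ≤ k → v k ≤ c) :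
    ∑ T : Finset ι, α ^ #T * (1 - α) ^ (Fintype.card ι - #T) * v #T
      ≤ ∑ T : Finset ι with #T < m, α ^ #T * (1 - α) ^ (Fintype.card ι - #T) + c := by
  have hw (T : Finset ι) : 0 ≤ α ^ #T * (1 - α) ^ (Fintype.card ι - #T) :=
    mul_nonneg (pow_nonneg h0 _) (pow_nonneg (sub_nonneg.mpr h1) _)
  calc ∑ T : Finset ι, α ^ #T * (1 - α) ^ (Fintype.card ι - #T) * v #T
      ≤ ∑ T : Finset ι,
          α ^ #T * (1 - α) ^ (Fintype.card ι - #T) * ((if #T < m then 1 else 0) + c) := by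
        gcongr with T
        split_ifs with h
        · linarith [hv #T]
        · linarith [hvc #T (not_lt.mp h)]
    _ = ∑ T : Finset ι with #T < m, α ^ #T * (1 - α) ^ (Fintype.card ι - #T) + c := by
        simp_rw [mul_add, sum_add_distrib, ← sum_mul, Fintype.sum_pow_mul_eq_add_pow, sum_filter]
        simp

section Games

variable {r : ℕ} {Q A : Fin r → Type} {Qbar : Finset (∀ j, Q j)}
  {V : (∀ j, Q j) → (∀ j, A j) → Bool} {ι : Type*} [Fintype ι] [DecidableEq ι]

lemma exists_forall_wins_of_gameValue_eq_one [∀ j, Fintype (Q j)] [∀ j, Fintype (A j)]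
    (h : gameValue Qbar V = 1) :
    ∃ S : ∀ j, Q j → A j, ∀ q ∈ Qbar, V q (fun j => S j (q j)) = true := by
  set val := fun S : ∀ j, Q j → A j =>
    (#{q ∈ Qbar | V q (fun j => S j (q j)) = true} : ℝ) / #Qbar
  have hrange : gameValue Qbar V = sSup (Set.range val) := by
    rw [gameValue]; congr 1; ext; exact exists_congr fun _ => eq_comm
  rcases (Set.range val).eq_empty_or_nonempty with he | hne
  · simp [hrange, he] at h
  obtain ⟨S, hS⟩ := hne.csSup_mem (Set.finite_range val)
  rw [← hrange, h] at hS
  have hQbar : (#Qbar : ℝ) ≠ 0 := fun h0 => by simp [val, h0] at hS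
  have hcard : #{q ∈ Qbar | V q (fun j => S j (q j)) = true} = #Qbar := by
    exact_mod_cast (div_eq_one_iff_eq hQbar).mp hS
  exact ⟨S, filter_eq_self.mp (eq_of_subset_of_card_le (filter_subset _ _) hcard.ge)⟩

lemma distValue_eq_one_of_forall_wins {Qd : (∀ j, Q j) → ℝ} (hQd : ∀ q ∈ Qbar, 0 ≤ Qd q)
    (hsum : ∑ q ∈ Qbar, Qd q = 1) {S : ∀ j, Q j → A j}
    (hS : ∀ q ∈ Qbar, V q (fun j => S j (q j)) = true) :
    distValue Qbar Qd V = 1 := by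
  refine IsGreatest.csSup_eq ⟨⟨S, by rw [filter_true_of_mem hS, hsum]⟩, ?_⟩
  rintro _ ⟨S', rfl⟩
  exact hsum ▸ sum_le_sum_of_subset_of_nonneg (filter_subset _ _) fun q hq _ => hQd q hq

def winningQuestions (Qbar : Finset (∀ j, Q j)) (V : (∀ j, Q j) → (∀ j, A j) → Bool)
    (S : ∀ j, (ι → Q j) → (ι → A j)) : Finset (ι → ∀ j, Q j) :=
  {q ∈ Fintype.piFinset fun _ : ι => Qbar | ∀ i, V (q i) (fun j => S j (fun i' => q i' j) i) = true}

@[simp]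
lemma mem_winningQuestions {S : ∀ j, (ι → Q j) → (ι → A j)} {q : ι → ∀ j, Q j} :
    q ∈ winningQuestions Qbar V S ↔
      (∀ i, q i ∈ Qbar) ∧ ∀ i, V (q i) (fun j => S j (fun i' => q i' j) i) = true := by
  simp [winningQuestions]

lemma winningQuestions_subset {S : ∀ j, (ι → Q j) → (ι → A j)} :
    winningQuestions Qbar V S ⊆ Fintype.piFinset fun _ => Qbar :=
  filter_subset _ _

def restrictStrategy (S : ∀ j, (ι → Q j) → (ι → A j)) (T : Finset ι)
    (w : ↥Tᶜ → ∀ j, Q j) : ∀ j, (T → Q j) → (T → A j) :=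
  fun j u i => S j (fun i' => if h : i' ∈ T then u ⟨i', h⟩ else w ⟨i', mem_compl.mpr h⟩ j) i

lemma restrict_mem_winningQuestions {S : ∀ j, (ι → Q j) → (ι → A j)} {q : ι → ∀ j, Q j}
    (hq : q ∈ winningQuestions Qbar V S) (T : Finset ι) :
    (fun i : T => q i) ∈ winningQuestions Qbar V (restrictStrategy S T fun i => q i) := by
  simp only [mem_winningQuestions, restrictStrategy, dite_eq_ite, ite_self] at hq ⊢
  exact ⟨fun i => hq.1 i, fun i => hq.2 i⟩

lemma card_winningQuestions_div_le_one {n : ℕ} (S : ∀ j, (Fin n → Q j) → (Fin n → A j)) :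
    (#(winningQuestions Qbar V S) : ℝ) / #(Fintype.piFinset fun _ : Fin n => Qbar) ≤ 1 :=
  div_le_one_of_le₀ (mod_cast card_le_card winningQuestions_subset) (Nat.cast_nonneg _)

variable [∀ j, DecidableEq (Q j)]

-- Not `rfl`: for `ι = Fin n` the filters in `repValue` and `distRepValue` use the decidability
-- instance `Nat.decidableForallFin`, not the generic one of `winningQuestions`.
lemma repValue_eq_sSup (n : ℕ) :
    repValue n Qbar V = sSup {x : ℝ | ∃ S : ∀ j, (Fin n → Q j) → (Fin n → A j),
      x = #(winningQuestions Qbar V S) / #(Fintype.piFinset fun _ : Fin n => Qbar)} := by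
  simp only [repValue, winningQuestions]
  congr!

lemma distRepValue_eq_sSup (n : ℕ) (Qd : (∀ j, Q j) → ℝ) :
    distRepValue n Qbar Qd V = sSup {x : ℝ | ∃ S : ∀ j, (Fin n → Q j) → (Fin n → A j),
      x = ∑ q ∈ winningQuestions Qbar V S, ∏ i, Qd (q i)} := by
  simp only [distRepValue, winningQuestions]
  congr!

lemma le_repValue {n : ℕ} (S : ∀ j, (Fin n → Q j) → (Fin n → A j)) :
    (#(winningQuestions Qbar V S) : ℝ) / #(Fintype.piFinset fun _ : Fin n => Qbar)
      ≤ repValue n Qbar V := by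
  rw [repValue_eq_sSup]
  exact le_csSup ⟨1, by rintro _ ⟨S, rfl⟩; exact card_winningQuestions_div_le_one S⟩ ⟨S, rfl⟩

lemma repValue_le_one (n : ℕ) : repValue n Qbar V ≤ 1 := by
  rw [repValue_eq_sSup]
  exact Real.sSup_le (by rintro _ ⟨S, rfl⟩; exact card_winningQuestions_div_le_one S) zero_le_one

lemma repValue_nonneg (n : ℕ) : 0 ≤ repValue n Qbar V :=
  Real.sSup_nonneg (by rintro _ ⟨S, rfl⟩; positivity)

lemma card_winningQuestions_le (S : ∀ j, (ι → Q j) → (ι → A j)) :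
    (#(winningQuestions Qbar V S) : ℝ)
      ≤ #Qbar ^ Fintype.card ι * repValue (Fintype.card ι) Qbar V := by
  set e := Fintype.equivFin ι
  let S' : ∀ j, (Fin (Fintype.card ι) → Q j) → (Fin (Fintype.card ι) → A j) :=
    fun j x l => S j (x ∘ e) (e.symm l)
  have hcard : #(winningQuestions Qbar V S) = #(winningQuestions Qbar V S') := by
    refine card_equiv (e.arrowCongr (Equiv.refl _)) fun q => ?_
    simpa [S', Function.comp_def] using and_congr e.forall_congr_left e.forall_congr_left
  have hP : (#(Fintype.piFinset fun _ : Fin (Fintype.card ι) => Qbar) : ℝ)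
      = #Qbar ^ Fintype.card ι := by simp
  have hsub : (#(winningQuestions Qbar V S') : ℝ) ≤ #Qbar ^ Fintype.card ι :=
    hP ▸ mod_cast card_le_card winningQuestions_subset
  have hrep := le_repValue (Qbar := Qbar) (V := V) S'
  rw [hcard]
  rcases (hsub.trans' (Nat.cast_nonneg _)).eq_or_lt with h0 | hpos
  · simpa [← h0] using hsub
  · rwa [hP, div_le_iff₀ hpos, mul_comm] at hrep

lemma card_winningQuestions_fiber_le (S : ∀ j, (ι → Q j) → (ι → A j)) (T : Finset ι)
    (w : ↥Tᶜ → ∀ j, Q j) :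
    (#{q ∈ winningQuestions Qbar V S | (fun i : ↥Tᶜ => q i) = w} : ℝ)
      ≤ #Qbar ^ #T * repValue #T Qbar V := by
  have hinj : #{q ∈ winningQuestions Qbar V S | (fun i : ↥Tᶜ => q i) = w}
      ≤ #(winningQuestions Qbar V (restrictStrategy S T w)) := by
    refine card_le_card_of_injOn (fun q (i : T) => q i) ?_ ?_
    · intro q hq
      obtain ⟨hq, hw⟩ := mem_filter.mp hq
      rw [← hw]
      exact restrict_mem_winningQuestions hq T
    · intro q₁ hq₁ q₂ hq₂ h
      obtain ⟨-, hw₁⟩ := mem_filter.mp hq₁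
      obtain ⟨-, hw₂⟩ := mem_filter.mp hq₂
      funext i
      by_cases hi : i ∈ T
      · exact congrFun h ⟨i, hi⟩
      · exact congrFun (hw₁.trans hw₂.symm) ⟨i, mem_compl.mpr hi⟩
  simpa using (Nat.cast_le.mpr hinj).trans (card_winningQuestions_le (restrictStrategy S T w))

lemma sum_winningQuestions_prod_compl_le (g : (∀ j, Q j) → ℝ) (hg : ∀ x ∈ Qbar, 0 ≤ g x)
    (S : ∀ j, (ι → Q j) → (ι → A j)) (T : Finset ι) :
    ∑ q ∈ winningQuestions Qbar V S, ∏ i ∈ Tᶜ, g (q i)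
      ≤ (∑ x ∈ Qbar, g x) ^ (Fintype.card ι - #T) * (#Qbar ^ #T * repValue #T Qbar V) := by
  have hmaps : ∀ q ∈ winningQuestions Qbar V S,
      (fun i : ↥Tᶜ => q i) ∈ Fintype.piFinset fun _ => Qbar := fun q hq =>
    Fintype.mem_piFinset.mpr fun i => (mem_winningQuestions.mp hq).1 i
  rw [← sum_fiberwise_of_maps_to hmaps]
  calc ∑ w ∈ Fintype.piFinset (fun _ : ↥Tᶜ => Qbar),
        ∑ q ∈ winningQuestions Qbar V S with (fun i : ↥Tᶜ => q i) = w, ∏ i ∈ Tᶜ, g (q i)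
      = ∑ w ∈ Fintype.piFinset (fun _ : ↥Tᶜ => Qbar), (∏ i, g (w i)) *
          #{q ∈ winningQuestions Qbar V S | (fun i : ↥Tᶜ => q i) = w} := by
        refine sum_congr rfl fun w _ => ?_
        rw [mul_comm, ← nsmul_eq_mul, ← sum_const]
        refine sum_congr rfl fun q hq => ?_
        rw [← (mem_filter.mp hq).2, ← prod_coe_sort]
    _ ≤ ∑ w ∈ Fintype.piFinset (fun _ : ↥Tᶜ => Qbar), (∏ i, g (w i)) *
          (#Qbar ^ #T * repValue #T Qbar V) := by
        gcongr with w hw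
        · exact prod_nonneg fun i _ => hg _ (Fintype.mem_piFinset.mp hw i)
        · exact card_winningQuestions_fiber_le S T w
    _ = (∑ x ∈ Qbar, g x) ^ (Fintype.card ι - #T) * (#Qbar ^ #T * repValue #T Qbar V) := by
        rw [← sum_mul, ← prod_univ_sum, prod_const, card_univ, Fintype.card_coe, card_compl]

lemma distRepValue_le_sum_repValue {n : ℕ} {Qd : (∀ j, Q j) → ℝ} {ε : ℝ} (hε : 0 ≤ ε)
    (hεQd : ∀ q ∈ Qbar, ε ≤ Qd q) (hsum : ∑ q ∈ Qbar, Qd q = 1) :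
    distRepValue n Qbar Qd V ≤ ∑ T : Finset (Fin n),
      (ε * #Qbar) ^ #T * (1 - ε * #Qbar) ^ (n - #T) * repValue #T Qbar V := by
  set g := fun q => Qd q - ε
  have hg : ∀ q ∈ Qbar, 0 ≤ g q := fun q hq => sub_nonneg.mpr (hεQd q hq)
  have hgsum : ∑ q ∈ Qbar, g q = 1 - ε * #Qbar := by
    simp [g, sum_sub_distrib, hsum, mul_comm]
  have hα1 : 0 ≤ 1 - ε * #Qbar := hgsum ▸ sum_nonneg hg
  rw [distRepValue_eq_sSup]
  refine Real.sSup_le ?_ (sum_nonneg fun T _ =>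
    mul_nonneg (by positivity) (repValue_nonneg _))
  rintro _ ⟨S, rfl⟩
  calc ∑ q ∈ winningQuestions Qbar V S, ∏ i, Qd (q i)
      = ∑ q ∈ winningQuestions Qbar V S, ∑ T : Finset (Fin n), ε ^ #T * ∏ i ∈ Tᶜ, g (q i) := by
        refine sum_congr rfl fun q _ => ?_
        simp_rw [show ∀ i, Qd (q i) = ε + g (q i) from fun i => by simp [g]]
        simp [prod_add, compl_eq_univ_sdiff]
    _ = ∑ T : Finset (Fin n), ε ^ #T * ∑ q ∈ winningQuestions Qbar V S, ∏ i ∈ Tᶜ, g (q i) := by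
        rw [sum_comm]; simp_rw [mul_sum]
    _ ≤ ∑ T : Finset (Fin n),
          ε ^ #T * ((1 - ε * #Qbar) ^ (n - #T) * (#Qbar ^ #T * repValue #T Qbar V)) := by
        gcongr with T
        simpa [hgsum] using sum_winningQuestions_prod_compl_le g hg S T
    _ = ∑ T : Finset (Fin n),
          (ε * #Qbar) ^ #T * (1 - ε * #Qbar) ^ (n - #T) * repValue #T Qbar V := by
        simp_rw [mul_pow]; ring_nf

end Games

theorem statement3_general (r : ℕ) (Q : Fin r → Type) [∀ j, Fintype (Q j)] [∀ j, DecidableEq (Q j)]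
    (Qbar : Finset (∀ j, Q j)) (hne : Qbar.Nonempty)
    (Qd : (∀ j, Q j) → ℝ)
    (hpos : ∀ q ∈ Qbar, 0 < Qd q)
    (hsum : ∑ q ∈ Qbar, Qd q = 1)
    (ε α : ℝ) (hε : ε = Qbar.inf' hne Qd) (hα : α = ε * (Qbar.card : ℝ))
    (f : ℕ → ℝ) (hf0 : ∀ m, 0 ≤ f m) (hmono : Antitone f)
    (hbound : ∀ m : ℕ, 1 ≤ m → ∀ (A : Fin r → Type),
      (∀ j, Fintype (A j)) → (∀ j, Nonempty (A j)) →
      ∀ V : (∀ j, Q j) → (∀ j, A j) → Bool,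
        gameValue Qbar V ≠ 1 → repValue m Qbar V ≤ f m)
    (A : Fin r → Type) [∀ j, Fintype (A j)] [∀ j, Nonempty (A j)]
    (V : (∀ j, Q j) → (∀ j, A j) → Bool)
    (hnt : distValue Qbar Qd V ≠ 1)
    (n : ℕ) (hn : 1 ≤ n) :
    distRepValue n Qbar Qd V ≤ Real.exp (-(α ^ 2 * n) / 2) + f ⌈α * n / 2⌉₊ := by
  have hεQd : ∀ q ∈ Qbar, ε ≤ Qd q := fun q hq => hε ▸ inf'_le Qd hq
  have hε0 : 0 < ε := by
    obtain ⟨q, hq, hmin⟩ := exists_mem_eq_inf' hne Qd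
    exact hε ▸ hmin ▸ hpos q hq
  have hα0 : 0 < α := hα ▸ mul_pos hε0 (mod_cast hne.card_pos)
  have hα1 : α ≤ 1 := by
    rw [hα, ← hsum]; simpa [mul_comm] using sum_le_sum hεQd
  have hm : 1 ≤ ⌈α * n / 2⌉₊ := Nat.ceil_pos.mpr (by positivity)
  have hV : gameValue Qbar V ≠ 1 := fun h =>
    let ⟨_, hS⟩ := exists_forall_wins_of_gameValue_eq_one h
    hnt (distValue_eq_one_of_forall_wins (fun q hq => (hpos q hq).le) hsum hS)
  calc distRepValue n Qbar Qd V
      ≤ ∑ T : Finset (Fin n), α ^ #T * (1 - α) ^ (n - #T) * repValue #T Qbar V :=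
        hα ▸ distRepValue_le_sum_repValue hε0.le hεQd hsum
    _ ≤ ∑ T : Finset (Fin n) with #T < ⌈α * n / 2⌉₊, α ^ #T * (1 - α) ^ (n - #T)
          + f ⌈α * n / 2⌉₊ := by
        simpa using sum_pow_mul_pow_mul_le (ι := Fin n) hα0.le hα1 (hf0 _) repValue_le_one
          fun k hk => (hbound k (hm.trans hk) A (fun _ => inferInstance) (fun _ => inferInstance)
            V hV).trans (hmono hk)
    _ ≤ exp (-(α ^ 2 * n) / 2) + f ⌈α * n / 2⌉₊ := by
        gcongr
        simpa using sum_pow_mul_pow_of_card_lt_ceil_le_exp (ι := Fin n) hα0.le hα1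

/-- Reduction of parallel repetition for a non-uniform question distribution `Qd` with
support `Qbar`, minimum probability `ε` and `α = ε·|Q̄|`, to the uniform case: if every
non-trivial game over `Qbar` with the uniform distribution satisfies `val(Hᵐ) ≤ f(m)`
(`f` non-increasing, `[0,1]`-valued), then every non-trivial game over the distribution
`Qd` satisfies `val(Gⁿ) ≤ exp(-α²n/2) + f(⌈αn/2⌉)`. -/
theorem statement3 (r : ℕ) (Q : Fin r → Type) [∀ j, Fintype (Q j)] [∀ j, DecidableEq (Q j)]
    (Qbar : Finset (∀ j, Q j)) (hne : Qbar.Nonempty)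
    (hcov : ∀ (j : Fin r) (x : Q j), ∃ q ∈ Qbar, q j = x)
    (Qd : (∀ j, Q j) → ℝ)
    (hpos : ∀ q ∈ Qbar, 0 < Qd q) (hsupp : ∀ q ∉ Qbar, Qd q = 0)
    (hsum : ∑ q ∈ Qbar, Qd q = 1)
    (ε α : ℝ) (hε : ε = Qbar.inf' hne Qd) (hα : α = ε * (Qbar.card : ℝ))
    (f : ℕ → ℝ) (hf0 : ∀ m, 0 ≤ f m) (hf1 : ∀ m, f m ≤ 1) (hmono : Antitone f)
    (hbound : ∀ m : ℕ, 1 ≤ m → ∀ (A : Fin r → Type),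
      (∀ j, Fintype (A j)) → (∀ j, Nonempty (A j)) →
      ∀ V : (∀ j, Q j) → (∀ j, A j) → Bool,
        gameValue Qbar V ≠ 1 → repValue m Qbar V ≤ f m)
    (A : Fin r → Type) [∀ j, Fintype (A j)] [∀ j, Nonempty (A j)]
    (V : (∀ j, Q j) → (∀ j, A j) → Bool)
    (hnt : distValue Qbar Qd V ≠ 1)
    (n : ℕ) (hn : 1 ≤ n) :
    distRepValue n Qbar Qd V ≤ Real.exp (-(α ^ 2 * n) / 2) + f ⌈α * n / 2⌉₊ :=
  statement3_general r Q Qbar hne Qd hpos hsum ε α hε hα f hf0 hmono hbound A V hnt n hn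
end

section
/- Let r ≥ 3. The only homomorphisms of the question set Q̄_r to itself are the identity homomorphism Id and the constant homomorphisms 1_q̄ for q̄ ∈ Q̄_r. -/
/-- The question set `Q̄_r ⊆ {0,1}^r`: tuples with exactly one coordinate equal to 1. -/
def QbarR (r : ℕ) : Finset (Fin r → Bool) :=
  Finset.univ.filter fun q => (Finset.univ.filter fun j => q j = true).card = 1

/-!
Write `Z` for the set of provers `j` with `f j false = true`. The image of the hyperedge
`e_i` has a `1` at every `j ∈ Z \ {i}`, and at `i` iff `f i true = true`; it must have exactly
one `1`. If `Z = ∅`, this forces `f i true = true` for every `i`, so `f = Id`. If `a ∈ Z`, then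
any other `b ∈ Z` would give two `1`s in the image of `e_i` for a third prover `i ∉ {a, b}`
(here `r ≥ 3` is used); so `Z = {a}`, and looking at `e_j` for `j ≠ a` and at `e_a` shows that
`f` is the constant homomorphism `1_{e_a}`.
-/

theorem mem_QbarR_iff {r : ℕ} {q : Fin r → Bool} : q ∈ QbarR r ↔ ∃! j, q j = true := by
  simp [QbarR, Fintype.existsUnique_iff_card_one]

theorem decide_eq_mem_QbarR {r : ℕ} (i : Fin r) : (fun j => decide (j = i)) ∈ QbarR r :=
  mem_QbarR_iff.mpr ⟨i, by simp, fun j => by simp⟩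

/-- `f` is a homomorphism of the question set `{e_i}` of one-hot vectors in `ι → Bool`. -/
def IsOneHotHom {ι : Type*} [DecidableEq ι] (f : ι → Bool → Bool) : Prop :=
  ∀ i, ∃! j, f j (decide (j = i)) = true

namespace IsOneHotHom

variable {ι : Type*} [DecidableEq ι] {f : ι → Bool → Bool}

theorem eq_id_of_apply_false (hf : IsOneHotHom f) (h0 : ∀ j, f j false = false) :
    ∀ j, f j = id := by
  intro i
  obtain ⟨j, hj, -⟩ := hf i
  obtain rfl : j = i := by
    by_contra hji
    simp [hji, h0] at hj
  funext b
  cases b <;> simp_all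

theorem eq_of_apply_false (hf : IsOneHotHom f) (hcard : 3 ≤ ENat.card ι) {a b : ι}
    (ha : f a false = true) (hb : f b false = true) : b = a := by
  obtain ⟨i, hia, hib⟩ := ENat.exists_ne_ne_of_three_le hcard a b
  obtain ⟨j, -, hj⟩ := hf i
  rw [hj a (by simpa [Ne.symm hia] using ha), hj b (by simpa [Ne.symm hib] using hb)]

theorem eq_const_of_apply_false (hf : IsOneHotHom f) (hcard : 3 ≤ ENat.card ι) {a : ι}
    (ha : f a false = true) : ∀ j b, f j b = decide (j = a) := by
  have hZ : ∀ j, f j false = true → j = a := fun j hj => hf.eq_of_apply_false hcard ha hj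
  have hat : f a true = true := by
    obtain ⟨k, hk, -⟩ := hf a
    obtain rfl : k = a := by
      by_contra hka
      exact hka (hZ k (by simpa [hka] using hk))
    simpa using hk
  have hjt : ∀ j, j ≠ a → f j true = false := by
    intro j hja
    obtain ⟨k, -, hk⟩ := hf j
    by_contra hj
    exact hja ((hk j (by simpa using hj)).trans (hk a (by simpa [Ne.symm hja] using ha)).symm)
  intro j b
  by_cases hja : j = a
  · subst hja
    cases b <;> simp [ha, hat]
  · cases b
    · simpa [hja] using mt (hZ j) hja
    · simpa [hja] using hjt j hja

end IsOneHotHom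

/-- For `r ≥ 3`, the only homomorphisms of the question set `Q̄_r` into itself
(tuples of maps `f j : Bool → Bool`, one per prover, sending hyperedges of `Q̄_r`
to hyperedges of `Q̄_r`) are the identity homomorphism and the constant
homomorphisms `1_q̄` for hyperedges `q̄ ∈ Q̄_r`. -/
theorem statement7 (r : ℕ) (hr : 3 ≤ r) (f : ∀ _ : Fin r, Bool → Bool)
    (hf : ∀ q ∈ QbarR r, (fun j => f j (q j)) ∈ QbarR r) :
    (∀ j, f j = id) ∨ ∃ qbar ∈ QbarR r, ∀ (j : Fin r) (b : Bool), f j b = qbar j := by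
  have hom : IsOneHotHom f := fun i => mem_QbarR_iff.mp (hf _ (decide_eq_mem_QbarR i))
  have hcard : 3 ≤ ENat.card (Fin r) := by simpa using hr
  by_cases hZ : ∃ a, f a false = true
  · obtain ⟨a, ha⟩ := hZ
    exact Or.inr ⟨_, decide_eq_mem_QbarR a, hom.eq_const_of_apply_false hcard ha⟩
  · simp only [not_exists, Bool.not_eq_true] at hZ
    exact Or.inl (hom.eq_id_of_apply_false hZ)
end
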